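/- Theorem 3 (unsolvability of k-set agreement by multi-round protocols): let n ≥ 1, 1 ≤ k ≤ n, and m ≥ 1. Then there exists no morphism δ from the product update model I[IS^m] to the product update model I[SA_k]; consequently, the k-set agreement task among n+1 processes is not solvable by the m-round iterated immediate snapshot protocol. -/

import Mathlib

/-! ## Epistemic μ-calculus: syntax and Kripke semantics -/

/-- Positive formulas of the epistemic μ-calculus: atoms, negated atoms,
propositional variables (indexed by `ℕ`), disjunction, conjunction,
distributed knowledge `D_A`, and greatest fixpoints `νZ.φ`. -/
inductive Formula (AP Agent : Type) : Type
  | atom  : AP → Formula AP Agent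
  | natom : AP → Formula AP Agent
  | var   : ℕ → Formula AP Agent
  | or    : Formula AP Agent → Formula AP Agent → Formula AP Agent
  | and   : Formula AP Agent → Formula AP Agent → Formula AP Agent
  | know  : Set Agent → Formula AP Agent → Formula AP Agent
  | nu    : ℕ → Formula AP Agent → Formula AP Agent

/-- A Kripke model: indistinguishability relations and a labeling. -/
structure KModel (Agent AP S : Type) where
  rel : Agent → S → S → Prop
  label : S → Set AP

/-- Derived relation `≈_A`. -/
def KModel.relD {Agent AP S : Type} (M : KModel Agent AP S) (A : Set Agent) (X Y : S) : Prop :=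
  ∀ a ∈ A, M.rel a X Y

/-- The semantics `⟦φ⟧^M_ρ`. -/
def sem {Agent AP S : Type} (M : KModel Agent AP S) (ρ : ℕ → Set S) :
    Formula AP Agent → Set S
  | .atom p   => {X | p ∈ M.label X}
  | .natom p  => {X | p ∉ M.label X}
  | .var Z    => ρ Z
  | .or φ ψ   => sem M ρ φ ∪ sem M ρ ψ
  | .and φ ψ  => sem M ρ φ ∩ sem M ρ ψ
  | .know A φ => {X | ∀ Y, M.relD A Y X → Y ∈ sem M ρ φ}
  | .nu Z φ   => ⋃₀ {T | T ⊆ sem M (Function.update ρ Z T) φ}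

/-- Free propositional variables of a formula. -/
def Formula.freeVars {AP Agent : Type} : Formula AP Agent → Set ℕ
  | .atom _   => ∅
  | .natom _  => ∅
  | .var Z    => {Z}
  | .or φ ψ   => φ.freeVars ∪ ψ.freeVars
  | .and φ ψ  => φ.freeVars ∪ ψ.freeVars
  | .know _ φ => φ.freeVars
  | .nu Z φ   => φ.freeVars \ {Z}

/-- All propositional variables occurring in a formula (free or bound). -/
def Formula.vars {AP Agent : Type} : Formula AP Agent → Set ℕ
  | .atom _   => ∅
  | .natom _  => ∅
  | .var Z    => {Z}
  | .or φ ψ   => φ.vars ∪ ψ.vars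
  | .and φ ψ  => φ.vars ∪ ψ.vars
  | .know _ φ => φ.vars
  | .nu Z φ   => insert Z φ.vars

/-- Satisfaction of a closed formula (under every interpretation). -/
def Models {Agent AP S : Type} (M : KModel Agent AP S) (X : S) (φ : Formula AP Agent) : Prop :=
  ∀ ρ, X ∈ sem M ρ φ

/-- Validity of a closed formula in a model. -/
def ValidIn {Agent AP S : Type} (M : KModel Agent AP S) (φ : Formula AP Agent) : Prop :=
  ∀ X, Models M X φ

/-! ## Simplicial models presented by facet data -/

/-- A (pure chromatic) simplicial model presented by its facets: each state
(facet) `σ` has, for every color `a ∈ Π`, a unique vertex `(a, vert σ a)` with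
value in `V`; `label` gives the atomic propositions true at each facet. -/
structure SModel (n : ℕ) (V AP S : Type) where
  vert : S → Fin (n + 1) → V
  label : S → Set AP

/-- The induced Kripke model: `σ ∼_a τ` iff `σ` and `τ` share their vertex of
color `a` (i.e. `a ∈ χ(σ ∩ τ)`). -/
def SModel.toKModel {n : ℕ} {V AP S : Type} (M : SModel n V AP S) :
    KModel (Fin (n + 1)) AP S where
  rel a σ τ := M.vert σ a = M.vert τ a
  label := M.label

/-- Satisfaction of a closed formula at a state of a simplicial model. -/
def ModelsS {n : ℕ} {V AP S : Type} (M : SModel n V AP S) (σ : S)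
    (φ : Formula AP (Fin (n + 1))) : Prop :=
  ∀ ρ, σ ∈ sem M.toKModel ρ φ

/-- Validity of a closed formula in a simplicial model. -/
def ValidInS {n : ℕ} {V AP S : Type} (M : SModel n V AP S)
    (φ : Formula AP (Fin (n + 1))) : Prop :=
  ∀ σ, ModelsS M σ φ

/-- A morphism of simplicial models: a color-preserving vertex map `vmap`
sending every simplex of the source to a simplex of the target (hence every
facet `σ` to the facet `smap σ`), preserving the labeling. -/
structure SMorphism {n : ℕ} {V V' AP S S' : Type}
    (M : SModel n V AP S) (M' : SModel n V' AP S') where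
  vmap : Fin (n + 1) × V → Fin (n + 1) × V'
  color : ∀ p, (vmap p).1 = p.1
  smap : S → S'
  vert_comm : ∀ σ a, vmap (a, M.vert σ a) = (a, M'.vert (smap σ) a)
  label_eq : ∀ σ, M.label σ = M'.label (smap σ)

/-! ## Ordered set partitions, iterated immediate snapshot views, and the
product update models `I[IS^m]` and `I[SA_k]` -/

/-- An ordered set partition `⟨A₁|A₂|…|A_r⟩` of `Π = Fin (n+1)`. -/
structure OSP (n : ℕ) where
  parts : List (Finset (Fin (n + 1)))
  nonempty : ∀ A ∈ parts, A.Nonempty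
  pairwise_disjoint : parts.Pairwise Disjoint
  cover : ∀ a : Fin (n + 1), ∃ A ∈ parts, a ∈ A

/-- `view*_a(γ) = A₁ ∪ … ∪ A_q` where `a ∈ A_q`: the set of processes seen by
`a` in the snapshot round `γ`. -/
def OSP.viewSet {n : ℕ} (γ : OSP n) (a : Fin (n + 1)) : Finset (Fin (n + 1)) :=
  (γ.parts.take (γ.parts.findIdx (fun A => decide (a ∈ A)) + 1)).foldr (· ∪ ·) ∅

/-- Iterated snapshot views: `base v` is an initial input value, and `snap f`
is the view of a process after a snapshot round, recording (for exactly the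
processes it has seen) their views at the previous round. -/
inductive View (n : ℕ) : Type
  | base : Fin (n + 1) → View n
  | snap : (Fin (n + 1) → Option (View n)) → View n

/-- `iisView X m γ a` is `view_a(X·γ₁·…·γ_m)`, the view of process `a` in the
facet `X·γ₁·…·γ_m` of the `m`-iterated standard chromatic subdivision of the
input facet `X` (where `γ i` is the `(i+1)`-st round's ordered set partition). -/
def iisView {n : ℕ} (X : Fin (n + 1) → Fin (n + 1)) :
    (m : ℕ) → (Fin m → OSP n) → Fin (n + 1) → View n
  | 0, _, a => .base (X a)
  | m + 1, γ, a => .snap (fun b =>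
      if b ∈ (γ (Fin.last m)).viewSet a then
        some (iisView X m (fun i => γ i.castSucc) b)
      else none)

/-- Facets of `I[IS^m]`: an input facet `X ∈ F(I)` (given by the input values
of the `n+1` processes) together with the `m` rounds' ordered set partitions. -/
def IISState (n m : ℕ) : Type := (Fin (n + 1) → Fin (n + 1)) × (Fin m → OSP n)

/-- Atomic propositions with factual change: `Sum.inl (a,v)` is `input_{a,v}`
and `Sum.inr (a,d)` is `decide_{a,d}`. -/
abbrev APfc (n : ℕ) := (Fin (n + 1) × Fin (n + 1)) ⊕ (Fin (n + 1) × Fin (n + 1))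

/-- The product update model `I[IS^m]` of the `m`-round iterated immediate
snapshot protocol (labels mention only inputs). -/
def IISmodel (n m : ℕ) : SModel n (View n) (APfc n) (IISState n m) where
  vert σ a := iisView σ.1 m σ.2 a
  label σ := {p | ∃ a, p = Sum.inl (a, σ.1 a)}

/-- Facets of `I[SA_k]`: a pair of an input assignment and an output
assignment of the `n+1` processes, such that at most `k` values are decided
and every decided value is some process's input. -/
def SAState (n k : ℕ) : Type :=
  {p : (Fin (n + 1) → Fin (n + 1)) × (Fin (n + 1) → Fin (n + 1)) //
    (Finset.univ.image p.2).card ≤ k ∧ Finset.univ.image p.2 ⊆ Finset.univ.image p.1}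

/-- The product update model `I[SA_k]` of the `k`-set agreement task
(labels mention only inputs). -/
def SAmodel (n k : ℕ) : SModel n (Fin (n + 1) × Fin (n + 1)) (APfc n) (SAState n k) where
  vert σ a := (σ.val.1 a, σ.val.2 a)
  label σ := {p | ∃ a, p = Sum.inl (a, σ.val.1 a)}

/-- The factual-change extension `I[SA_k]^fc`: same Kripke frame, labels also
mention the decided values. -/
def SAfc (n k : ℕ) : SModel n (Fin (n + 1) × Fin (n + 1)) (APfc n) (SAState n k) where
  vert σ a := (σ.val.1 a, σ.val.2 a)
  label σ := {p | (∃ a, p = Sum.inl (a, σ.val.1 a)) ∨ ∃ a, p = Sum.inr (a, σ.val.2 a)}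

/-- The factual-change model `I[IS^m]^{fc,δ}` for a morphism
`δ : I[IS^m] → I[SA_k]`: the Kripke frame of `I[IS^m]` with labels pulled
back from `I[SA_k]^fc` along `δ`. -/
def IISfc (n m k : ℕ) (δ : SMorphism (IISmodel n m) (SAmodel n k)) :
    SModel n (View n) (APfc n) (IISState n m) where
  vert σ a := iisView σ.1 m σ.2 a
  label σ := (SAfc n k).label (δ.smap σ)

/-! ## The concrete specification formulas -/

/-- Finite conjunction of a list of formulas (the empty conjunction is the
valid formula `νZ.Z`; all conjunctions used below are over nonempty lists). -/
def conjF {AP Agent : Type} : List (Formula AP Agent) → Formula AP Agent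
  | [] => .nu 0 (.var 0)
  | [φ] => φ
  | φ :: l => .and φ (conjF l)

/-- Finite disjunction of a list of formulas (all disjunctions used below are
over nonempty lists). -/
def disjF {AP Agent : Type} : List (Formula AP Agent) → Formula AP Agent
  | [] => .nu 0 (.var 0)
  | [φ] => φ
  | φ :: l => .or φ (disjF l)

/-- The list of all agents `0,…,n`. -/
def allAgents (n : ℕ) : List (Fin (n + 1)) := List.finRange (n + 1)

/-- All pairs of agents. -/
def agentPairs (n : ℕ) : List (Fin (n + 1) × Fin (n + 1)) :=
  (allAgents n).flatMap (fun i => (allAgents n).map (fun j => (i, j)))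

/-- The list of all nonempty subsets of `Π`. -/
noncomputable def neSubsets (n : ℕ) : List (Finset (Fin (n + 1))) :=
  ((Finset.univ : Finset (Fin (n + 1))).powerset.filter (fun A => A.Nonempty)).toList

/-- `IFUN`: each process has exactly one input value
(`¬(p ∧ q)` is written positively as `¬p ∨ ¬q`). -/
def IFUN (n : ℕ) : Formula (APfc n) (Fin (n + 1)) :=
  conjF ((allAgents n).map (fun a => .and
    (conjF (((agentPairs n).filter (fun p => decide (p.1 ≠ p.2))).map
      (fun p => .or (.natom (Sum.inl (a, p.1))) (.natom (Sum.inl (a, p.2))))))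
    (disjF ((allAgents n).map (fun i => .atom (Sum.inl (a, i)))))))

/-- `OFUN`: each process decides exactly one output value. -/
def OFUN (n : ℕ) : Formula (APfc n) (Fin (n + 1)) :=
  conjF ((allAgents n).map (fun a => .and
    (conjF (((agentPairs n).filter (fun p => decide (p.1 ≠ p.2))).map
      (fun p => .or (.natom (Sum.inr (a, p.1))) (.natom (Sum.inr (a, p.2))))))
    (disjF ((allAgents n).map (fun d => .atom (Sum.inr (a, d)))))))

/-- `VALID`: every decided value is some process's input. -/
def VALIDf (n : ℕ) : Formula (APfc n) (Fin (n + 1)) :=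
  conjF ((allAgents n).map (fun a =>
    conjF ((allAgents n).map (fun d =>
      .or (.natom (Sum.inr (a, d)))
          (disjF ((allAgents n).map (fun b => .atom (Sum.inl (b, d)))))))))

/-- `AGREE_k`: at most `k` different values are decided. -/
noncomputable def AGREEf (n k : ℕ) : Formula (APfc n) (Fin (n + 1)) :=
  disjF ((((Finset.univ : Finset (Fin (n + 1))).powerset.filter
      (fun A => 0 < A.card ∧ A.card ≤ k)).toList).map (fun A =>
    conjF ((allAgents n).map (fun a =>
      disjF (A.toList.map (fun d => .atom (Sum.inr (a, d))))))))

/-- `KNOW`: a decided value is distributed knowledge in any group containing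
the decider. -/
noncomputable def KNOWf (n : ℕ) : Formula (APfc n) (Fin (n + 1)) :=
  conjF ((neSubsets n).map (fun A =>
    conjF (A.toList.map (fun a =>
      conjF ((allAgents n).map (fun d =>
        .or (.natom (Sum.inr (a, d)))
            (.know (↑A) (.atom (Sum.inr (a, d))))))))))

/-- `DEC_A = ⋀_{d=0}^{|A|−1} ⋁_{a∈A} decide_{a,d}`. -/
noncomputable def DECf (n : ℕ) (A : Finset (Fin (n + 1))) :
    Formula (APfc n) (Fin (n + 1)) :=
  conjF ((List.range A.card).map (fun d =>
    disjF (A.toList.map (fun a => .atom (Sum.inr (a, Fin.ofNat (n + 1) d))))))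

/-- `¬DEC_A` in positive (de Morgan) form. -/
noncomputable def NDECf (n : ℕ) (A : Finset (Fin (n + 1))) :
    Formula (APfc n) (Fin (n + 1)) :=
  disjF ((List.range A.card).map (fun d =>
    conjF (A.toList.map (fun a => .natom (Sum.inr (a, Fin.ofNat (n + 1) d))))))

/-- The unsolvability formula
`Φ_k = νZ.[OFUN ∧ VALID ∧ ⋀_{∅≠A⊆Π}(DEC_A ⇒ D_A(KNOW ∧ AGREE_k ∧ Z))]`. -/
noncomputable def Phi (n k : ℕ) : Formula (APfc n) (Fin (n + 1)) :=
  .nu 0 (.and (OFUN n) (.and (VALIDf n)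
    (conjF ((neSubsets n).map (fun A =>
      .or (NDECf n A)
          (.know (↑A) (.and (KNOWf n) (.and (AGREEf n k) (.var 0)))))))))

/-! ## Restricted-form ordered set partitions and the flip operation -/

/-- The trailing singleton parts `⟨d+1|d+2|…|n⟩`. -/
def trailing (n d : ℕ) : List (Finset (Fin (n + 1))) :=
  ((List.finRange (n + 1)).filter (fun (i : Fin (n + 1)) => decide (d < (i : ℕ)))).map (fun i => {i})

/-- `γ` has the restricted form `⟨A₁|…|A_r|d+1|…|n⟩`, with prefix `l = [A₁,…,A_r]`
an ordered set partition of `[0,d]` followed by the singletons `d+1,…,n`. -/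
def RestForm (n d : ℕ) (γ : OSP n) (l : List (Finset (Fin (n + 1)))) : Prop :=
  γ.parts = l ++ trailing n d ∧ ∀ A ∈ l, ∀ a ∈ A, (a : ℕ) ≤ d

/-- `flip_A` on the prefix `[A₁,…,A_r]`, for `A = [0,d] ∖ {b}`:
moves `b` one position later in the ordered set partition. -/
def flipB {n : ℕ} (b : Fin (n + 1)) :
    List (Finset (Fin (n + 1))) → List (Finset (Fin (n + 1)))
  | [] => []
  | A :: rest =>
    if b ∈ A then
      if 1 < A.card then A.erase b :: {b} :: rest
      else
        match rest with
        | [] => [A]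
        | B :: rest' => insert b B :: rest'
    else A :: flipB b rest

/-! ## The input facets `I_d`, the collections `F_d`, and the relation `R^A` -/

/-- The input facet `I_d = {(i,i) | i ≤ d} ∪ {(i,d) | d < i}` (as an input
assignment). -/
def Idf (n d : ℕ) : Fin (n + 1) → Fin (n + 1) :=
  fun i => if (i : ℕ) ≤ d then i else Fin.ofNat (n + 1) d

/-- The collection `F_d ⊆ F(I[IS^m])`: facets `I_d·γ₁·…·γ_m` where every `γ_i`
has the restricted form `⟨A_{i,1}|…|A_{i,r_i}|d+1|…|n⟩`. -/
def Fset (n m d : ℕ) : Set (IISState n m) :=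
  {σ | σ.1 = Idf n d ∧ ∀ i, ∃ l, RestForm n d (σ.2 i) l}

/-- The singletons-in-increasing-order partition `⟨0|1|…|n⟩`. -/
def gbar (n : ℕ) : OSP n where
  parts := (List.finRange (n + 1)).map (fun i => {i})
  nonempty := by
    intro A hA
    rcases List.mem_map.mp hA with ⟨i, _, rfl⟩
    exact Finset.singleton_nonempty i
  pairwise_disjoint := by
    rw [List.pairwise_map]
    exact (List.nodup_finRange (n + 1)).imp
      (fun h => Finset.disjoint_singleton.mpr h)
  cover := by
    intro a
    exact ⟨{a}, List.mem_map.mpr ⟨a, List.mem_finRange a, rfl⟩, Finset.mem_singleton_self a⟩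

/-- The relation `R^A` on `⋃_{d=0}^k F_d` (for a morphism
`δ : I[IS^m] → I[SA_k]`): `σ R^A σ'` iff `σ ≈_A σ'`, `σ ≠ σ'`, `A ⊆ [0,|A|]`,
`σ ∈ F_d`, `σ' ∈ F_e` with `d,e ≤ k`, `max d e = |A|`, `|d − e| ≤ 1`, and both
`σ` and `σ'` satisfy `DEC_A` in `I[IS^m]^{fc,δ}`. -/
noncomputable def Rrel (n m k : ℕ) (δ : SMorphism (IISmodel n m) (SAmodel n k))
    (A : Finset (Fin (n + 1))) (σ σ' : IISState n m) : Prop :=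
  (IISmodel n m).toKModel.relD (↑A) σ σ' ∧ σ ≠ σ' ∧
  (∀ a ∈ A, (a : ℕ) ≤ A.card) ∧
  (∃ d e : ℕ, d ≤ k ∧ e ≤ k ∧ σ ∈ Fset n m d ∧ σ' ∈ Fset n m e ∧
    max d e = A.card ∧ d ≤ e + 1 ∧ e ≤ d + 1) ∧
  ModelsS (IISfc n m k δ) σ (DECf n A) ∧ ModelsS (IISfc n m k δ) σ' (DECf n A)

/-! ## Carrier sets, contention sets, and the k-concurrency model -/

/-- `carrier_a(X·γ₁·γ₂) = ⋃_{b ∈ view*_a(γ₂)} view*_b(γ₁)`. -/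
def carrierSet (n : ℕ) (σ : IISState n 2) (a : Fin (n + 1)) : Finset (Fin (n + 1)) :=
  ((σ.2 1).viewSet a).biUnion (σ.2 0).viewSet

/-- The contention sets of a facet of `I[IS^2]`. -/
def ContSets (n : ℕ) (σ : IISState n 2) : Set (Finset (Fin (n + 1))) :=
  {A | ∀ a ∈ A, carrierSet n σ a = A.biUnion (carrierSet n σ)}

/-- The facets of the `k`-concurrency model `R_k`. -/
def kConcStates (n k : ℕ) : Set (IISState n 2) :=
  {σ | ∀ A ∈ ContSets n σ, A.card ≤ k}

/-- The `k`-concurrency model `R_k`, the simplicial submodel of `I[IS^2]` on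
the facets in `kConcStates`. -/
def RModel (n k : ℕ) : SModel n (View n) (APfc n) {σ : IISState n 2 // σ ∈ kConcStates n k} where
  vert σ a := iisView σ.val.1 2 σ.val.2 a
  label σ := {p | ∃ a, p = Sum.inl (a, σ.val.1 a)}


namespace KSU
open scoped Classical

variable {α : Type*} [DecidableEq α] [Fintype α]




/-- A one-round immediate-snapshot view assignment over ground set `S`. -/
def ISR (S : Finset α) (W : α → Finset α) : Prop :=
  (∀ a, a ∉ S → W a = ∅) ∧
  (∀ a ∈ S, a ∈ W a) ∧
  (∀ a ∈ S, W a ⊆ S) ∧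
  (∀ a ∈ S, ∀ b ∈ W a, W b ⊆ W a) ∧
  (∀ a ∈ S, ∀ b ∈ S, W a ⊆ W b ∨ W b ⊆ W a)

/-- A multi-round facet (head = last round). -/
def Fac (S : Finset α) (L : List (α → Finset α)) : Prop := ∀ W ∈ L, ISR S W

/-- Equality of the full views of agent `a` in two facets. -/
def Eqv : List (α → Finset α) → List (α → Finset α) → α → Prop
  | [], [], _ => True
  | W :: t, W' :: t', a => W a = W' a ∧ ∀ b ∈ W a, Eqv t t' b
  | _, _, _ => False

/-- The carrier (set of processes transitively seen) of agent `a`. -/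
def CarrL : List (α → Finset α) → α → Finset α
  | [], a => {a}
  | W :: t, a => (W a).biUnion (CarrL t)

lemma eqv_refl : ∀ (L : List (α → Finset α)) (a : α), Eqv L L a := by
  intro L
  induction L with
  | nil => intro a; trivial
  | cons W t ih => intro a; exact ⟨rfl, fun b _ => ih b⟩

lemma eqv_symm : ∀ (L L' : List (α → Finset α)) (a : α), Eqv L L' a → Eqv L' L a := by
  intro L
  induction L with
  | nil => intro L' a h; cases L' with
    | nil => trivial
    | cons W t => exact h.elim
  | cons W t ih => intro L' a h; cases L' with
    | nil => exact h.elim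
    | cons W' t' =>
      obtain ⟨h1, h2⟩ := h
      exact ⟨h1.symm, fun b hb => ih t' b (h2 b (h1 ▸ hb))⟩

lemma eqv_all_eq {S : Finset α} : ∀ (L L' : List (α → Finset α)),
    Fac S L → Fac S L' → L.length = L'.length →
    (∀ a ∈ S, Eqv L L' a) → L = L' := by
  intro L
  induction L with
  | nil => intro L' _ _ hl _; cases L' with
    | nil => rfl
    | cons _ _ => simp at hl
  | cons W t ih =>
    intro L' hF hF' hl h
    cases L' with
    | nil => simp at hl
    | cons W' t' =>
      have hW : W = W' := by
        funext a
        by_cases ha : a ∈ S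
        · exact (h a ha).1
        · rw [(hF W (by simp)).1 a ha, (hF' W' (by simp)).1 a ha]
      have ht : t = t' := by
        apply ih t' (fun X hX => hF X (by simp [hX])) (fun X hX => hF' X (by simp [hX]))
          (by simpa using hl)
        intro a ha
        exact (h a ha).2 a ((hF W (by simp)).2.1 a ha)
      rw [hW, ht]

lemma carr_self {S : Finset α} : ∀ (L : List (α → Finset α)) (a : α),
    Fac S L → a ∈ S → a ∈ CarrL L a := by
  intro L
  induction L with
  | nil => intro a _ _; simp [CarrL]
  | cons W t ih =>
    intro a hF ha
    simp only [CarrL, Finset.mem_biUnion]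
    exact ⟨a, (hF W (by simp)).2.1 a ha, ih a (fun X hX => hF X (by simp [hX])) ha⟩

lemma carr_subset {S : Finset α} : ∀ (L : List (α → Finset α)) (a : α),
    Fac S L → a ∈ S → CarrL L a ⊆ S := by
  intro L
  induction L with
  | nil => intro a _ ha; simp [CarrL, Finset.singleton_subset_iff, ha]
  | cons W t ih =>
    intro a hF ha
    simp only [CarrL]
    intro x hx
    rw [Finset.mem_biUnion] at hx
    obtain ⟨b, hb, hx⟩ := hx
    exact ih b (fun X hX => hF X (by simp [hX])) ((hF W (by simp)).2.2.1 a ha hb) hx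

/-- `c` is seen by someone else in some round of `L`. -/
def Seen (S : Finset α) (c : α) (L : List (α → Finset α)) : Prop :=
  ∃ W ∈ L, ∃ b ∈ S.erase c, c ∈ W b

lemma not_seen_carr {S : Finset α} {c : α} : ∀ (L : List (α → Finset α)),
    Fac S L → ¬ Seen S c L → ∀ b ∈ S.erase c, c ∉ CarrL L b := by
  intro L
  induction L with
  | nil =>
    intro _ _ b hb
    simp only [CarrL, Finset.mem_singleton]
    exact fun h => (Finset.mem_erase.mp hb).1 h.symm
  | cons W t ih =>
    intro hF hns b hb
    simp only [CarrL, Finset.mem_biUnion]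
    rintro ⟨e, he, hce⟩
    have hbS := (Finset.mem_erase.mp hb).2
    have heS : e ∈ S := (hF W (by simp)).2.2.1 b hbS he
    have hec : e ≠ c := by
      rintro rfl
      exact hns ⟨W, by simp, b, hb, he⟩
    exact ih (fun X hX => hF X (by simp [hX]))
      (fun ⟨X, hX, hw⟩ => hns ⟨X, by simp [hX], hw⟩) e (Finset.mem_erase.mpr ⟨hec, heS⟩) hce



def Tset (S : Finset α) (c : α) (W : α → Finset α) : Finset α :=
  (S.erase c).filter (fun b => c ∈ W b)

def Pset (S : Finset α) (c : α) (W : α → Finset α) : Finset α :=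
  ((S.erase c).filter (fun b => c ∉ W b)).biUnion W

def Iset (S : Finset α) (c : α) (W : α → Finset α) : Finset α :=
  (Tset S c W).inf W

def otherV (S : Finset α) (c : α) (W : α → Finset α) : Finset α :=
  if W c = insert c (Pset S c W) then Iset S c W else insert c (Pset S c W)

def flipW (S : Finset α) (c : α) (W : α → Finset α) : α → Finset α :=
  Function.update W c (otherV S c W)

def SeenW (S : Finset α) (c : α) (W : α → Finset α) : Prop := ∃ b ∈ S.erase c, c ∈ W b

section OneRound
variable {S : Finset α} {c : α} {W : α → Finset α}

lemma mem_Tset {b : α} : b ∈ Tset S c W ↔ b ∈ S ∧ b ≠ c ∧ c ∈ W b := by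
  simp [Tset, Finset.mem_filter, Finset.mem_erase, and_comm, and_assoc]
  tauto

lemma mem_Pset {x : α} : x ∈ Pset S c W ↔ ∃ b, b ∈ S ∧ b ≠ c ∧ c ∉ W b ∧ x ∈ W b := by
  simp only [Pset, Finset.mem_biUnion, Finset.mem_filter, Finset.mem_erase]
  tauto

lemma exists_inf_chain {β : Type*} [DecidableEq β] (T : Finset β) (f : β → Finset α)
    (hne : T.Nonempty) (hch : ∀ x ∈ T, ∀ y ∈ T, f x ⊆ f y ∨ f y ⊆ f x) :
    ∃ b ∈ T, T.inf f = f b := by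
  induction T using Finset.induction_on with
  | empty => exact absurd hne (by simp)
  | @insert a s ha ih =>
    rcases s.eq_empty_or_nonempty with rfl | hs
    · exact ⟨a, by simp⟩
    · obtain ⟨b, hb, hfb⟩ := ih hs (fun x hx y hy =>
        hch x (by simp [hx]) y (by simp [hy]))
      rcases hch a (by simp) b (by simp [hb]) with h | h
      · exact ⟨a, by simp, by
          rw [Finset.inf_insert, hfb]
          exact inf_eq_left.mpr (Finset.le_iff_subset.mpr h)⟩
      · exact ⟨b, by simp [hb], by
          rw [Finset.inf_insert, hfb]
          exact inf_eq_right.mpr (Finset.le_iff_subset.mpr h)⟩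

lemma iset_le {b : α} (hb : b ∈ Tset S c W) : Iset S c W ⊆ W b :=
  Finset.le_iff_subset.mp (Finset.inf_le hb)

lemma pset_subset (hW : ISR S W) (hc : c ∈ S) :
    insert c (Pset S c W) ⊆ W c := by
  intro x hx
  rcases Finset.mem_insert.mp hx with h | hx
  · rw [h]; exact hW.2.1 c hc
  · obtain ⟨b, hbS, hbc, hcb, hx⟩ := mem_Pset.mp hx
    have hsub : W b ⊆ W c := by
      rcases hW.2.2.2.2 c hc b hbS with h | h
      · exact absurd (h (hW.2.1 c hc)) hcb
      · exact h
    exact hsub hx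

lemma wb_subset_pset {b : α} (hb : b ∈ S) (hbc : b ≠ c) (hcb : c ∉ W b) :
    W b ⊆ Pset S c W := by
  intro x hx
  exact mem_Pset.mpr ⟨b, hb, hbc, hcb, hx⟩

lemma wc_subset_iset (hW : ISR S W) (hc : c ∈ S) : W c ⊆ Iset S c W := by
  refine Finset.le_iff_subset.mp (Finset.le_inf ?_)
  intro b hb
  obtain ⟨hbS, hbc, hcb⟩ := mem_Tset.mp hb
  exact Finset.le_iff_subset.mpr (hW.2.2.2.1 b hbS c hcb)

lemma iset_spec (hW : ISR S W) (hc : c ∈ S) (hs : SeenW S c W) :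
    ∃ b₀ ∈ Tset S c W, Iset S c W = W b₀ := by
  obtain ⟨b, hb, hcb⟩ := hs
  obtain ⟨hbc, hbS⟩ := Finset.mem_erase.mp hb
  apply exists_inf_chain _ _ ⟨b, mem_Tset.mpr ⟨hbS, hbc, hcb⟩⟩
  intro x hx y hy
  exact hW.2.2.2.2 x (mem_Tset.mp hx).1 y (mem_Tset.mp hy).1

lemma b0_not_mem (hW : ISR S W) {b₀ : α} (hb₀ : b₀ ∈ Tset S c W) :
    b₀ ∉ insert c (Pset S c W) := by
  obtain ⟨hb₀S, hb₀c, hcb₀⟩ := mem_Tset.mp hb₀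
  intro h
  rcases Finset.mem_insert.mp h with h | h
  · exact hb₀c h
  · obtain ⟨e, heS, hec, hce, hb0e⟩ := mem_Pset.mp h
    exact hce (hW.2.2.2.1 e heS b₀ hb0e hcb₀)

lemma iset_ne (hW : ISR S W) (hc : c ∈ S) (hs : SeenW S c W) :
    Iset S c W ≠ insert c (Pset S c W) := by
  obtain ⟨b₀, hb₀, hI⟩ := iset_spec hW hc hs
  rw [hI]
  intro h
  exact b0_not_mem hW hb₀ (h ▸ hW.2.1 b₀ (mem_Tset.mp hb₀).1)

lemma wc_dichotomy (hW : ISR S W) (hc : c ∈ S) (hs : SeenW S c W) :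
    W c = insert c (Pset S c W) ∨ W c = Iset S c W := by
  by_cases h : ∀ e ∈ W c, e ∈ insert c (Pset S c W)
  · exact Or.inl (Finset.Subset.antisymm h (pset_subset hW hc))
  · push_neg at h
    obtain ⟨e, he, hep⟩ := h
    right
    have heS : e ∈ S := hW.2.2.1 c hc he
    have hec : e ≠ c := fun h => hep (by rw [h]; exact Finset.mem_insert_self c _)
    have hce : c ∈ W e := by
      by_contra hce
      exact hep (Finset.mem_insert_of_mem (wb_subset_pset heS hec hce (hW.2.1 e heS)))
    have h1 : Iset S c W ⊆ W e := iset_le (mem_Tset.mpr ⟨heS, hec, hce⟩)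
    exact Finset.Subset.antisymm (wc_subset_iset hW hc) (h1.trans (hW.2.2.2.1 c hc e he))

lemma otherV_ne (hW : ISR S W) (hc : c ∈ S) (hs : SeenW S c W) :
    otherV S c W ≠ W c := by
  rw [otherV]
  split_ifs with h
  · rw [h]; exact iset_ne hW hc hs
  · exact fun he => h he.symm

lemma otherV_alt : otherV S c W = insert c (Pset S c W) ∨ otherV S c W = Iset S c W := by
  rw [otherV]; split_ifs with h
  · exact Or.inr rfl
  · exact Or.inl rfl

lemma flipW_isr (hW : ISR S W) (hc : c ∈ S) (hs : SeenW S c W) :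
    ISR S (flipW S c W) := by
  obtain ⟨b₀, hb₀, hI⟩ := iset_spec hW hc hs
  obtain ⟨hb₀S, hb₀c, hcb₀⟩ := mem_Tset.mp hb₀
  have hualt := otherV_alt (S := S) (c := c) (W := W)
  have hcu : c ∈ otherV S c W := by
    rcases hualt with h | h
    · rw [h]; exact Finset.mem_insert_self c _
    · rw [h, hI]; exact hcb₀
  have huS : otherV S c W ⊆ S := by
    rcases hualt with h | h
    · rw [h]; exact (pset_subset hW hc).trans (hW.2.2.1 c hc)
    · rw [h, hI]; exact hW.2.2.1 b₀ hb₀S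
  have huI : otherV S c W ⊆ Iset S c W := by
    rcases hualt with h | h
    · rw [h]; exact (pset_subset hW hc).trans (wc_subset_iset hW hc)
    · rw [h]
  have h1 : ∀ b ∈ S, b ≠ c → c ∉ W b → W b ⊆ otherV S c W := by
    intro b hb hbc hcb
    have hwp := wb_subset_pset (S := S) hb hbc hcb
    rcases hualt with h | h
    · rw [h]; exact hwp.trans (Finset.subset_insert _ _)
    · rw [h]
      exact (hwp.trans (Finset.subset_insert c _)).trans
        ((pset_subset hW hc).trans (wc_subset_iset hW hc))
  have h2 : ∀ b ∈ S, b ≠ c → c ∈ W b → otherV S c W ⊆ W b := by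
    intro b hb hbc hcb
    exact huI.trans (iset_le (mem_Tset.mpr ⟨hb, hbc, hcb⟩))
  have h4 : ∀ e ∈ otherV S c W, e ≠ c → W e ⊆ otherV S c W := by
    intro e he hec
    rcases hualt with h | h <;> rw [h] at he ⊢
    · rcases Finset.mem_insert.mp he with h' | h'
      · exact absurd h' hec
      · obtain ⟨b, hbS, hbc, hcb, heb⟩ := mem_Pset.mp h'
        exact (hW.2.2.2.1 b hbS e heb).trans
          ((wb_subset_pset hbS hbc hcb).trans (Finset.subset_insert _ _))
    · rw [hI] at he ⊢
      exact hW.2.2.2.1 b₀ hb₀S e he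
  refine ⟨?_, ?_, ?_, ?_, ?_⟩
  · intro a ha
    rw [flipW, Function.update_of_ne (by rintro rfl; exact ha hc)]
    exact hW.1 a ha
  · intro a ha
    rw [flipW]
    by_cases hac : a = c
    · subst hac; rw [Function.update_self]; exact hcu
    · rw [Function.update_of_ne hac]; exact hW.2.1 a ha
  · intro a ha
    rw [flipW]
    by_cases hac : a = c
    · subst hac; rw [Function.update_self]; exact huS
    · rw [Function.update_of_ne hac]; exact hW.2.2.1 a ha
  · intro a ha b hb
    rw [flipW] at hb ⊢
    by_cases hac : a = c
    · rw [hac] at hb ⊢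
      rw [Function.update_self] at hb
      by_cases hbc : b = c
      · rw [hbc, Function.update_self]
      · rw [Function.update_of_ne hbc, Function.update_self]
        exact h4 b hb hbc
    · rw [Function.update_of_ne hac] at hb
      by_cases hbc : b = c
      · rw [hbc, Function.update_self, Function.update_of_ne hac]
        rw [hbc] at hb
        exact h2 a ha hac hb
      · rw [Function.update_of_ne hbc, Function.update_of_ne hac]
        exact hW.2.2.2.1 a ha b hb
  · intro a ha b hb
    rw [flipW]
    by_cases hac : a = c
    · by_cases hbc : b = c
      · rw [hac, hbc]; left; rfl
      · rw [hac, Function.update_self, Function.update_of_ne hbc]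
        by_cases hcb : c ∈ W b
        · exact Or.inl (h2 b hb hbc hcb)
        · exact Or.inr (h1 b hb hbc hcb)
    · by_cases hbc : b = c
      · rw [hbc, Function.update_self, Function.update_of_ne hac]
        by_cases hca : c ∈ W a
        · exact Or.inr (h2 a ha hac hca)
        · exact Or.inl (h1 a ha hac hca)
      · rw [Function.update_of_ne hac, Function.update_of_ne hbc]
        exact hW.2.2.2.2 a ha b hb

lemma pset_update (u : Finset α) : Pset S c (Function.update W c u) = Pset S c W := by
  ext x
  rw [mem_Pset, mem_Pset]
  constructor <;> rintro ⟨b, hbS, hbc, hcb, hx⟩ <;> refine ⟨b, hbS, hbc, ?_, ?_⟩ <;>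
    first
      | (rwa [Function.update_of_ne hbc] at hcb)
      | (rwa [Function.update_of_ne hbc] at hx)
      | (rwa [Function.update_of_ne hbc])

lemma tset_update (u : Finset α) : Tset S c (Function.update W c u) = Tset S c W := by
  ext b
  rw [mem_Tset, mem_Tset]
  constructor <;> rintro ⟨hbS, hbc, hcb⟩ <;> refine ⟨hbS, hbc, ?_⟩
  · rwa [Function.update_of_ne hbc] at hcb
  · rwa [Function.update_of_ne hbc]

lemma iset_update (u : Finset α) : Iset S c (Function.update W c u) = Iset S c W := by
  rw [Iset, Iset, tset_update]
  apply Finset.inf_congr rfl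
  intro b hb
  rw [Function.update_of_ne (mem_Tset.mp hb).2.1]

lemma seenW_update (u : Finset α) : SeenW S c (Function.update W c u) ↔ SeenW S c W := by
  unfold SeenW
  constructor <;> rintro ⟨b, hb, hcb⟩ <;> refine ⟨b, hb, ?_⟩
  · rwa [Function.update_of_ne (Finset.mem_erase.mp hb).1] at hcb
  · rwa [Function.update_of_ne (Finset.mem_erase.mp hb).1]

lemma flipW_flipW (hW : ISR S W) (hc : c ∈ S) (hs : SeenW S c W) :
    flipW S c (flipW S c W) = W := by
  have hov : otherV S c (Function.update W c (otherV S c W)) = W c := by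
    rw [otherV, Function.update_self, pset_update, iset_update]
    rcases wc_dichotomy hW hc hs with h | h
    · have h2 : otherV S c W = Iset S c W := by rw [otherV, if_pos h]
      rw [h2, if_neg (iset_ne hW hc hs), h]
    · have hne : W c ≠ insert c (Pset S c W) := by
        rw [h]; exact iset_ne hW hc hs
      have h2 : otherV S c W = insert c (Pset S c W) := by rw [otherV, if_neg hne]
      rw [h2, if_pos rfl, h]
  show Function.update (flipW S c W) c (otherV S c (flipW S c W)) = W
  rw [flipW, hov, Function.update_idem, Function.update_eq_self_iff]

end OneRound

lemma flipW_ne_aux {S : Finset α} {c : α} {W : α → Finset α}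
    (hW : ISR S W) (hc : c ∈ S) (hs : SeenW S c W) : flipW S c W ≠ W := by
  intro h
  apply otherV_ne hW hc hs
  have hcf := congrFun h c
  rwa [flipW, Function.update_self] at hcf

lemma flipW_apply {S : Finset α} {c : α} {W : α → Finset α} {b : α} (hbc : b ≠ c) :
    flipW S c W b = W b := Function.update_of_ne hbc _ _

lemma seenW_flipW {S : Finset α} {c : α} {W : α → Finset α} :
    SeenW S c (flipW S c W) ↔ SeenW S c W := seenW_update _
-- the real chunk 3
noncomputable def flipF (S : Finset α) (c : α) : List (α → Finset α) → List (α → Finset α)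
  | [] => []
  | W :: t => if SeenW S c W then flipW S c W :: t else W :: flipF S c t

lemma flipF_nil {S : Finset α} {c : α} : flipF S c ([] : List (α → Finset α)) = [] := rfl
lemma flipF_cons {S : Finset α} {c : α} (W : α → Finset α) (t : List (α → Finset α)) :
    flipF S c (W :: t) = if SeenW S c W then flipW S c W :: t else W :: flipF S c t := rfl

lemma flipF_length {S : Finset α} {c : α} : ∀ L : List (α → Finset α),
    (flipF S c L).length = L.length := by
  intro L
  induction L with
  | nil => rfl
  | cons W t ih =>
    rw [flipF_cons]
    split_ifs <;> simp [ih]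

lemma flipF_fac {S : Finset α} {c : α} (hc : c ∈ S) : ∀ L : List (α → Finset α),
    Fac S L → Fac S (flipF S c L) := by
  intro L
  induction L with
  | nil => intro h; exact h
  | cons W t ih =>
    intro hF
    rw [flipF_cons]
    split_ifs with hs
    · intro X hX
      rcases List.mem_cons.mp hX with h | hX
      · rw [h]; exact flipW_isr (hF W (by simp)) hc hs
      · exact hF X (by simp [hX])
    · intro X hX
      rcases List.mem_cons.mp hX with h | hX
      · rw [h]; exact hF W (by simp)
      · exact ih (fun Y hY => hF Y (by simp [hY])) X hX

lemma flipF_eqv {S : Finset α} {c : α} (hc : c ∈ S) : ∀ (L : List (α → Finset α)),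
    Fac S L → ∀ b ∈ S, b ≠ c → Eqv L (flipF S c L) b := by
  intro L
  induction L with
  | nil => intro _ b _ _; trivial
  | cons W t ih =>
    intro hF b hb hbc
    rw [flipF_cons]
    split_ifs with hs
    · exact ⟨(flipW_apply hbc).symm, fun e he => eqv_refl t e⟩
    · refine ⟨rfl, fun e he => ?_⟩
      have heS : e ∈ S := (hF W (by simp)).2.2.1 b hb he
      have hec : e ≠ c := by
        rintro rfl
        exact hs ⟨b, Finset.mem_erase.mpr ⟨hbc, hb⟩, he⟩
      exact ih (fun Y hY => hF Y (by simp [hY])) e heS hec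

lemma flipF_flipF {S : Finset α} {c : α} (hc : c ∈ S) : ∀ (L : List (α → Finset α)),
    Fac S L → flipF S c (flipF S c L) = L := by
  intro L
  induction L with
  | nil => intro _; rfl
  | cons W t ih =>
    intro hF
    rw [flipF_cons]
    split_ifs with hs
    · rw [flipF_cons, if_pos (seenW_flipW.mpr hs), flipW_flipW (hF W (by simp)) hc hs]
    · rw [flipF_cons, if_neg hs, ih (fun Y hY => hF Y (by simp [hY]))]

lemma flipF_ne {S : Finset α} {c : α} (hc : c ∈ S) : ∀ (L : List (α → Finset α)),
    Fac S L → (Seen S c L ↔ flipF S c L ≠ L) := by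
  intro L
  induction L with
  | nil =>
    intro _
    constructor
    · rintro ⟨W, hW, -⟩; exact absurd hW (by simp)
    · intro h; exact absurd rfl h
  | cons W t ih =>
    intro hF
    rw [flipF_cons]
    split_ifs with hs
    · constructor
      · intro _
        intro h
        have := List.cons.injEq (flipW S c W) t W t ▸ h
        rw [List.cons.injEq] at h
        exact flipW_ne_aux (hF W (by simp)) hc hs h.1
      · intro _
        exact ⟨W, by simp, hs⟩
    · have ihh := ih (fun Y hY => hF Y (by simp [hY]))
      constructor
      · rintro ⟨X, hX, b, hb, hcb⟩
        rcases List.mem_cons.mp hX with rfl | hX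
        · exact absurd ⟨b, hb, hcb⟩ hs
        · intro h
          rw [List.cons.injEq] at h
          exact (ihh.mp ⟨X, hX, b, hb, hcb⟩) h.2
      · intro h
        have : flipF S c t ≠ t := by
          intro he
          exact h (by rw [List.cons.injEq]; exact ⟨rfl, he⟩)
        obtain ⟨X, hX, b, hb, hcb⟩ := ihh.mpr this
        exact ⟨X, by simp [hX], b, hb, hcb⟩

-- boundary lemmas
lemma not_seen_wc {S : Finset α} {c : α} (hc : c ∈ S) : ∀ (L : List (α → Finset α)),
    Fac S L → ¬ Seen S c L → ∀ W ∈ L, W c = S := by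
  intro L hF hns W hW
  have hISR := hF W hW
  apply Finset.Subset.antisymm (hISR.2.2.1 c hc)
  intro b hb
  by_cases hbc : b = c
  · rw [hbc]; exact hISR.2.1 c hc
  · have : W b ⊆ W c := by
      rcases hISR.2.2.2.2 c hc b hb with h | h
      · exfalso
        exact hns ⟨W, hW, b, Finset.mem_erase.mpr ⟨hbc, hb⟩, h (hISR.2.1 c hc)⟩
      · exact h
    exact this (hISR.2.1 b hb)

lemma not_seen_not_mem {S : Finset α} {c : α} : ∀ (L : List (α → Finset α)),
    ¬ Seen S c L → ∀ W ∈ L, ∀ b ∈ S.erase c, c ∉ W b := by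
  intro L hns W hW b hb hcb
  exact hns ⟨W, hW, b, hb, hcb⟩

-- extension/restriction for the induction on S
noncomputable def extM (S : Finset α) (a₀ : α) (L : List (α → Finset α)) :
    List (α → Finset α) := L.map (fun W => Function.update W a₀ S)

noncomputable def resM (a₀ : α) (L : List (α → Finset α)) : List (α → Finset α) :=
  L.map (fun W => Function.update W a₀ ∅)

lemma extM_length {S : Finset α} {a₀ : α} (L : List (α → Finset α)) :
    (extM S a₀ L).length = L.length := by simp [extM]

lemma resM_length {a₀ : α} (L : List (α → Finset α)) :
    (resM a₀ L).length = L.length := by simp [resM]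

lemma extM_fac {S : Finset α} {a₀ : α} (ha₀ : a₀ ∈ S) (L : List (α → Finset α))
    (hF : Fac (S.erase a₀) L) : Fac S (extM S a₀ L) := by
  intro X hX
  rw [extM, List.mem_map] at hX
  obtain ⟨W, hW, rfl⟩ := hX
  have hISR := hF W hW
  have hWsub : ∀ b ∈ S.erase a₀, W b ⊆ S.erase a₀ := fun b hb => hISR.2.2.1 b hb
  refine ⟨?_, ?_, ?_, ?_, ?_⟩
  · intro a ha
    rw [Function.update_of_ne (fun h => ha (by rw [h]; exact ha₀))]
    exact hISR.1 a (fun h => ha (Finset.mem_of_mem_erase h))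
  · intro a ha
    by_cases haa : a = a₀
    · rw [haa, Function.update_self]; rw [← haa]; exact ha
    · rw [Function.update_of_ne haa]
      exact hISR.2.1 a (Finset.mem_erase.mpr ⟨haa, ha⟩)
  · intro a ha
    by_cases haa : a = a₀
    · rw [haa, Function.update_self]
    · rw [Function.update_of_ne haa]
      exact (hWsub a (Finset.mem_erase.mpr ⟨haa, ha⟩)).trans (Finset.erase_subset _ _)
  · intro a ha b hb
    by_cases haa : a = a₀
    · rw [haa, Function.update_self] at hb
      by_cases hba : b = a₀
      · rw [hba, haa, Function.update_self]
      · rw [Function.update_of_ne hba, haa, Function.update_self]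
        by_cases hbS : b ∈ S
        · exact (hWsub b (Finset.mem_erase.mpr ⟨hba, hbS⟩)).trans (Finset.erase_subset _ _)
        · rw [hISR.1 b (fun h => hbS (Finset.mem_of_mem_erase h))]
          exact Finset.empty_subset _
    · rw [Function.update_of_ne haa] at hb
      have haS : a ∈ S.erase a₀ := Finset.mem_erase.mpr ⟨haa, ha⟩
      have hbe : b ∈ S.erase a₀ := hWsub a haS hb
      have hba : b ≠ a₀ := (Finset.mem_erase.mp hbe).1
      rw [Function.update_of_ne hba, Function.update_of_ne haa]
      exact hISR.2.2.2.1 a haS b hb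
  · intro a ha b hb
    by_cases haa : a = a₀
    · by_cases hba : b = a₀
      · rw [haa, hba]; left; rfl
      · rw [haa, Function.update_self, Function.update_of_ne hba]
        right
        exact (hWsub b (Finset.mem_erase.mpr ⟨hba, hb⟩)).trans (Finset.erase_subset _ _)
    · by_cases hba : b = a₀
      · rw [hba, Function.update_self, Function.update_of_ne haa]
        left
        exact (hWsub a (Finset.mem_erase.mpr ⟨haa, ha⟩)).trans (Finset.erase_subset _ _)
      · rw [Function.update_of_ne haa, Function.update_of_ne hba]
        exact hISR.2.2.2.2 a (Finset.mem_erase.mpr ⟨haa, ha⟩) b (Finset.mem_erase.mpr ⟨hba, hb⟩)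

lemma extM_not_seen {S : Finset α} {a₀ : α} (L : List (α → Finset α))
    (hF : Fac (S.erase a₀) L) : ¬ Seen S a₀ (extM S a₀ L) := by
  rintro ⟨X, hX, b, hb, hcb⟩
  rw [extM, List.mem_map] at hX
  obtain ⟨W, hW, rfl⟩ := hX
  obtain ⟨hba, hbS⟩ := Finset.mem_erase.mp hb
  rw [Function.update_of_ne hba] at hcb
  by_cases hbe : b ∈ S.erase a₀
  · exact (Finset.mem_erase.mp ((hF W hW).2.2.1 b hbe hcb)).1 rfl
  · rw [(hF W hW).1 b hbe] at hcb
    exact absurd hcb (Finset.notMem_empty _)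

lemma resM_fac {S : Finset α} {a₀ : α} (L : List (α → Finset α))
    (hF : Fac S L) (hns : ¬ Seen S a₀ L) : Fac (S.erase a₀) (resM a₀ L) := by
  intro X hX
  rw [resM, List.mem_map] at hX
  obtain ⟨W, hW, rfl⟩ := hX
  have hISR := hF W hW
  have hsub : ∀ b ∈ S.erase a₀, W b ⊆ S.erase a₀ := by
    intro b hb x hx
    have hbS := (Finset.mem_erase.mp hb).2
    have hxS : x ∈ S := hISR.2.2.1 b hbS hx
    refine Finset.mem_erase.mpr ⟨?_, hxS⟩
    rintro rfl
    exact hns ⟨W, hW, b, hb, hx⟩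
  refine ⟨?_, ?_, ?_, ?_, ?_⟩
  · intro a ha
    by_cases haa : a = a₀
    · rw [haa, Function.update_self]
    · rw [Function.update_of_ne haa]
      exact hISR.1 a (fun h => ha (Finset.mem_erase.mpr ⟨haa, h⟩))
  · intro a ha
    rw [Function.update_of_ne (Finset.mem_erase.mp ha).1]
    exact hISR.2.1 a (Finset.mem_erase.mp ha).2
  · intro a ha
    rw [Function.update_of_ne (Finset.mem_erase.mp ha).1]
    exact hsub a ha
  · intro a ha b hb
    rw [Function.update_of_ne (Finset.mem_erase.mp ha).1] at hb
    have hbe := hsub a ha hb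
    rw [Function.update_of_ne (Finset.mem_erase.mp hbe).1,
      Function.update_of_ne (Finset.mem_erase.mp ha).1]
    exact hISR.2.2.2.1 a (Finset.mem_erase.mp ha).2 b hb
  · intro a ha b hb
    rw [Function.update_of_ne (Finset.mem_erase.mp ha).1,
      Function.update_of_ne (Finset.mem_erase.mp hb).1]
    exact hISR.2.2.2.2 a (Finset.mem_erase.mp ha).2 b (Finset.mem_erase.mp hb).2

lemma extM_resM {S : Finset α} {a₀ : α} (ha₀ : a₀ ∈ S) (L : List (α → Finset α))
    (hF : Fac S L) (hns : ¬ Seen S a₀ L) : extM S a₀ (resM a₀ L) = L := by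
  rw [extM, resM, List.map_map]
  conv_rhs => rw [← List.map_id L]
  apply List.map_congr_left
  intro W hW
  simp only [Function.comp_apply, id_eq, Function.update_idem]
  rw [← not_seen_wc ha₀ L hF hns W hW]
  exact Function.update_eq_self _ _

lemma resM_extM {S : Finset α} {a₀ : α} (L : List (α → Finset α))
    (hF : Fac (S.erase a₀) L) : resM a₀ (extM S a₀ L) = L := by
  rw [extM, resM, List.map_map]
  conv_rhs => rw [← List.map_id L]
  apply List.map_congr_left
  intro W hW
  simp only [Function.comp_apply, id_eq, Function.update_idem]
  rw [← (hF W hW).1 a₀ (by simp)]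
  exact Function.update_eq_self _ _

lemma carr_extM {S : Finset α} {a₀ : α} : ∀ (L : List (α → Finset α)),
    Fac (S.erase a₀) L → ∀ b ∈ S.erase a₀, CarrL (extM S a₀ L) b = CarrL L b := by
  intro L
  induction L with
  | nil => intro _ b _; rfl
  | cons W t ih =>
    intro hF b hb
    show ((Function.update W a₀ S) b).biUnion (CarrL (extM S a₀ t)) = (W b).biUnion (CarrL t)
    rw [Function.update_of_ne (Finset.mem_erase.mp hb).1]
    apply Finset.biUnion_congr rfl
    intro e he
    exact ih (fun Y hY => hF Y (by simp [hY])) e ((hF W (by simp)).2.2.1 b hb he)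

lemma eqv_extM {S : Finset α} {a₀ : α} : ∀ (L L' : List (α → Finset α)),
    Fac (S.erase a₀) L → ∀ b ∈ S.erase a₀, Eqv L L' b → Eqv (extM S a₀ L) (extM S a₀ L') b := by
  intro L
  induction L with
  | nil =>
    intro L' _ b _ h
    cases L' with
    | nil => trivial
    | cons _ _ => exact h.elim
  | cons W t ih =>
    intro L' hF b hb h
    cases L' with
    | nil => exact h.elim
    | cons W' t' =>
      obtain ⟨h1, h2⟩ := h
      constructor
      · show Function.update W a₀ S b = Function.update W' a₀ S b
        rw [Function.update_of_ne (Finset.mem_erase.mp hb).1,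
          Function.update_of_ne (Finset.mem_erase.mp hb).1]
        exact h1
      · intro e he
        have he' : e ∈ W b := by
          simpa [Function.update_of_ne (Finset.mem_erase.mp hb).1] using he
        show Eqv (extM S a₀ t) (extM S a₀ t') e
        exact ih t' (fun Y hY => hF Y (by simp [hY])) e
          ((hF W (by simp)).2.2.1 b hb he') (h2 e he')



noncomputable def roundFS (S : Finset α) : Finset (α → Finset α) :=
  Finset.univ.filter (ISR S)

noncomputable def FacetFS (S : Finset α) : ℕ → Finset (List (α → Finset α))
  | 0 => {[]}
  | m + 1 => ((roundFS S) ×ˢ FacetFS S m).image (fun p => p.1 :: p.2)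

lemma mem_facetFS {S : Finset α} : ∀ {m : ℕ} {L : List (α → Finset α)},
    L ∈ FacetFS S m ↔ L.length = m ∧ Fac S L := by
  intro m
  induction m with
  | zero =>
    intro L
    simp only [FacetFS, Finset.mem_singleton]
    constructor
    · rintro rfl; exact ⟨rfl, fun W hW => absurd hW (by simp)⟩
    · rintro ⟨h, -⟩; exact List.length_eq_zero_iff.mp h
  | succ m ih =>
    intro L
    simp only [FacetFS, Finset.mem_image, Finset.mem_product, Prod.exists]
    constructor
    · rintro ⟨W, t, ⟨hW, ht⟩, rfl⟩
      obtain ⟨hlen, hfac⟩ := ih.mp ht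
      refine ⟨by simp [hlen], ?_⟩
      intro X hX
      rcases List.mem_cons.mp hX with h | hX
      · rw [h]; exact (Finset.mem_filter.mp hW).2
      · exact hfac X hX
    · rintro ⟨hlen, hfac⟩
      cases L with
      | nil => simp at hlen
      | cons W t =>
        refine ⟨W, t, ⟨Finset.mem_filter.mpr ⟨Finset.mem_univ _, hfac W (by simp)⟩, ?_⟩, rfl⟩
        exact ih.mpr ⟨by simpa using hlen, fun X hX => hfac X (by simp [hX])⟩

lemma facetFS_empty : ∀ m : ℕ,
    FacetFS (∅ : Finset α) m = {List.replicate m (fun _ => (∅ : Finset α))} := by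
  intro m
  induction m with
  | zero => rfl
  | succ m ih =>
    have hr : roundFS (∅ : Finset α) = {fun _ => (∅ : Finset α)} := by
      ext W
      simp only [roundFS, Finset.mem_filter, Finset.mem_univ, true_and, Finset.mem_singleton]
      constructor
      · intro h; funext a; exact h.1 a (by simp)
      · rintro rfl
        exact ⟨fun _ _ => rfl, by simp, by simp, by simp, by simp⟩
    rw [FacetFS, hr, ih]
    rfl

/-- Per-facet door count: the doors of a labelled facet, counted mod 2,
equal the panchromatic indicator. -/
lemma doorsum (S : Finset α) (a₀ : α) (ha₀ : a₀ ∈ S) (lab : α → α)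
    (hmaps : ∀ a ∈ S, lab a ∈ S) :
    (∑ c ∈ S, if (S.erase c).image lab = S.erase a₀ then (1 : ZMod 2) else 0) =
      if S.image lab = S then 1 else 0 := by
  by_cases himg : S.image lab = S
  · -- bijective case
    rw [if_pos himg]
    have hinj : Set.InjOn lab ↑S := by
      rw [← Finset.card_image_iff]
      rw [himg]
    have key : ∀ c ∈ S, (S.erase c).image lab = S.erase (lab c) := by
      intro c hc
      ext x
      simp only [Finset.mem_image, Finset.mem_erase]
      constructor
      · rintro ⟨a, ⟨hac, haS⟩, rfl⟩
        refine ⟨fun h => hac (hinj haS hc h), ?_⟩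
        rw [← himg]
        exact Finset.mem_image_of_mem lab haS
      · rintro ⟨hx, hxS⟩
        rw [← himg] at hxS
        obtain ⟨a, haS, rfl⟩ := Finset.mem_image.mp hxS
        exact ⟨a, ⟨fun h => hx (by rw [h]), haS⟩, rfl⟩
    have ha₀img : a₀ ∈ S.image lab := by rw [himg]; exact ha₀
    obtain ⟨c₀, hc₀, hlc₀⟩ := Finset.mem_image.mp ha₀img
    have hiff : ∀ c ∈ S, ((S.erase c).image lab = S.erase a₀ ↔ c = c₀) := by
      intro c hc
      rw [key c hc]
      constructor
      · intro h
        have hlab : lab c = a₀ := by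
          by_contra hne
          have h1 : a₀ ∈ S.erase (lab c) := Finset.mem_erase.mpr ⟨fun hh => hne hh.symm, ha₀⟩
          rw [h] at h1
          exact (Finset.mem_erase.mp h1).1 rfl
        exact hinj hc hc₀ (by rw [hlab, hlc₀])
      · rintro rfl
        rw [hlc₀]
    calc ∑ c ∈ S, (if (S.erase c).image lab = S.erase a₀ then (1 : ZMod 2) else 0)
        = ∑ c ∈ S, (if c = c₀ then (1 : ZMod 2) else 0) := by
          apply Finset.sum_congr rfl
          intro c hc
          simp only [hiff c hc]
      _ = 1 := by rw [Finset.sum_ite_eq' S c₀ (fun _ => (1 : ZMod 2)), if_pos hc₀]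
  · rw [if_neg himg]
    by_cases himg2 : S.image lab = S.erase a₀
    · -- exactly two doors
      have hlt : (S.image lab).card < S.card := by
        rw [himg2, Finset.card_erase_of_mem ha₀]
        exact Nat.sub_lt (Finset.card_pos.mpr ⟨a₀, ha₀⟩) one_pos
      obtain ⟨x, hx, y, hy, hxy, hlxy⟩ :=
        Finset.exists_ne_map_eq_of_card_lt_of_maps_to hlt
          (fun a ha => Finset.mem_image_of_mem lab ha)
      -- image over erase of a twin equals full image
      have himgtwin : ∀ z w, z ∈ S → w ∈ S → z ≠ w → lab z = lab w →
          (S.erase z).image lab = S.image lab := by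
        intro z w hz hw hzw hlzw
        apply Finset.Subset.antisymm
        · exact Finset.image_subset_image (Finset.erase_subset _ _)
        · intro v hv
          obtain ⟨a, haS, rfl⟩ := Finset.mem_image.mp hv
          by_cases haz : a = z
          · apply Finset.mem_image.mpr
            refine ⟨w, Finset.mem_erase.mpr ⟨fun h => hzw h.symm, hw⟩, ?_⟩
            rw [← hlzw, ← haz]
          · exact Finset.mem_image.mpr ⟨a, Finset.mem_erase.mpr ⟨haz, haS⟩, rfl⟩
      have hinjx : Set.InjOn lab ↑(S.erase x) := by
        rw [← Finset.card_image_iff, himgtwin x y hx hy hxy hlxy,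
          Finset.card_erase_of_mem hx]
        rw [himg2, Finset.card_erase_of_mem ha₀]
      have hdoorx : (S.erase x).image lab = S.erase a₀ := by
        rw [himgtwin x y hx hy hxy hlxy, himg2]
      have hdoory : (S.erase y).image lab = S.erase a₀ := by
        rw [himgtwin y x hy hx (fun h => hxy h.symm) hlxy.symm, himg2]
      have hnodoor : ∀ c ∈ S, c ≠ x → c ≠ y → ¬ (S.erase c).image lab = S.erase a₀ := by
        intro c hc hcx hcy hdoor
        have hlc : lab c ∈ (S.erase c).image lab := by
          rw [hdoor, ← himg2]
          exact Finset.mem_image_of_mem lab hc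
        obtain ⟨c', hc', hlcc⟩ := Finset.mem_image.mp hlc
        obtain ⟨hc'c, hc'S⟩ := Finset.mem_erase.mp hc'
        by_cases hc'x : c' = x
        · -- lab c = lab x = lab y; c, y ∈ erase x
          have : c = y :=
            hinjx (Finset.mem_coe.mpr (Finset.mem_erase.mpr ⟨hcx, hc⟩))
              (Finset.mem_coe.mpr (Finset.mem_erase.mpr ⟨fun h => hxy h.symm, hy⟩))
              (by rw [← hlcc, hc'x, hlxy])
          exact hcy this
        · have : c' = c :=
            hinjx (Finset.mem_coe.mpr (Finset.mem_erase.mpr ⟨hc'x, hc'S⟩))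
              (Finset.mem_coe.mpr (Finset.mem_erase.mpr ⟨hcx, hc⟩)) hlcc
          exact hc'c this
      calc ∑ c ∈ S, (if (S.erase c).image lab = S.erase a₀ then (1 : ZMod 2) else 0)
          = ∑ c ∈ S, (if c = x ∨ c = y then (1 : ZMod 2) else 0) := by
            apply Finset.sum_congr rfl
            intro c hc
            congr 1
            apply propext
            constructor
            · intro h
              by_contra hor
              push_neg at hor
              exact hnodoor c hc hor.1 hor.2 h
            · rintro (rfl | rfl)
              · exact hdoorx
              · exact hdoory
        _ = 0 := by
            have : ∀ c ∈ S, (if c = x ∨ c = y then (1 : ZMod 2) else 0) =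
                (if c = x then 1 else 0) + (if c = y then 1 else 0) := by
              intro c hc
              by_cases h1 : c = x <;> by_cases h2 : c = y
              · exact absurd (by rw [← h1, h2]) hxy
              · simp [h1, h2, hxy, Ne.symm hxy]
              · simp [h1, h2, hxy, Ne.symm hxy]
              · simp [h1, h2, hxy, Ne.symm hxy]
            rw [Finset.sum_congr rfl this, Finset.sum_add_distrib,
              Finset.sum_ite_eq' S x (fun _ => (1 : ZMod 2)),
              Finset.sum_ite_eq' S y (fun _ => (1 : ZMod 2)), if_pos hx, if_pos hy]
            decide
    · -- no doors
      have : ∀ c ∈ S, ¬ (S.erase c).image lab = S.erase a₀ := by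
        intro c hc hdoor
        have : S.image lab = insert (lab c) ((S.erase c).image lab) := by
          conv_lhs => rw [← Finset.insert_erase hc]
          rw [Finset.image_insert]
        rw [hdoor] at this
        by_cases hlc : lab c = a₀
        · rw [hlc, Finset.insert_erase ha₀] at this
          exact himg this
        · rw [Finset.insert_eq_self.mpr
            (Finset.mem_erase.mpr ⟨hlc, hmaps c hc⟩)] at this
          exact himg2 this
      calc ∑ c ∈ S, (if (S.erase c).image lab = S.erase a₀ then (1 : ZMod 2) else 0)
          = ∑ c ∈ S, (0 : ZMod 2) := by
            apply Finset.sum_congr rfl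
            intro c hc
            rw [if_neg (this c hc)]
        _ = 0 := Finset.sum_const_zero

/-- **Sperner's lemma for iterated immediate-snapshot subdivisions.** -/
theorem sperner (S : Finset α) : ∀ (m : ℕ) (lab : α → List (α → Finset α) → α),
    (∀ a ∈ S, ∀ L L', L ∈ FacetFS S m → L' ∈ FacetFS S m → Eqv L L' a →
      lab a L = lab a L') →
    (∀ L ∈ FacetFS S m, ∀ a ∈ S, lab a L ∈ CarrL L a) →
    (∑ L ∈ FacetFS S m, if S.image (fun a => lab a L) = S then (1 : ZMod 2) else 0) = 1 := by
  induction S using Finset.strongInduction with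
  | _ S ih =>
    intro m lab hcong hsp
    rcases S.eq_empty_or_nonempty with rfl | hS
    · rw [facetFS_empty m, Finset.sum_singleton, Finset.image_empty, if_pos rfl]
    · obtain ⟨a₀, ha₀⟩ := hS
      have hconst : ∀ s : Finset (List (α → Finset α)),
          (∑ _x ∈ s, (1 : ZMod 2)) = (s.card : ZMod 2) := by
        intro s
        rw [Finset.sum_const, nsmul_eq_mul, mul_one]
      have hmapsS : ∀ L ∈ FacetFS S m, ∀ a ∈ S, lab a L ∈ S := by
        intro L hL a ha
        exact carr_subset L a (mem_facetFS.mp hL).2 ha (hsp L hL a ha)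
      have ev1 : ∑ L ∈ FacetFS S m, (∑ c ∈ S,
            if (S.erase c).image (fun a => lab a L) = S.erase a₀ then (1 : ZMod 2) else 0)
          = ∑ L ∈ FacetFS S m,
            (if S.image (fun a => lab a L) = S then (1 : ZMod 2) else 0) := by
        apply Finset.sum_congr rfl
        intro L hL
        exact doorsum S a₀ ha₀ _ (hmapsS L hL)
      rw [← ev1, Finset.sum_comm]
      have ev2 : ∀ c ∈ S, (∑ L ∈ FacetFS S m,
            if (S.erase c).image (fun a => lab a L) = S.erase a₀ then (1 : ZMod 2) else 0)
          = if c = a₀ then 1 else 0 := by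
        intro c hc
        have hstep1 : (∑ L ∈ FacetFS S m,
              if (S.erase c).image (fun a => lab a L) = S.erase a₀ then (1 : ZMod 2) else 0)
            = ∑ L ∈ (FacetFS S m).filter
                (fun L => (S.erase c).image (fun a => lab a L) = S.erase a₀), (1 : ZMod 2) :=
          (Finset.sum_filter _ _).symm
        rw [hstep1]
        set D := (FacetFS S m).filter
          (fun L => (S.erase c).image (fun a => lab a L) = S.erase a₀) with hDdef
        have hmemD : ∀ {L}, L ∈ D →
            L ∈ FacetFS S m ∧ (S.erase c).image (fun a => lab a L) = S.erase a₀ := by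
          intro L hL
          exact Finset.mem_filter.mp hL
        have hunion : D.filter (Seen S c) ∪ D.filter (fun L => ¬ Seen S c L) = D :=
          Finset.filter_union_filter_not_eq (Seen S c) D
        have hdisj : Disjoint (D.filter (Seen S c)) (D.filter (fun L => ¬ Seen S c L)) :=
          Finset.disjoint_filter_filter_not D D (Seen S c)
        rw [← hunion, Finset.sum_union hdisj]
        have hint : (∑ L ∈ D.filter (Seen S c), (1 : ZMod 2)) = 0 := by
          apply Finset.sum_involution (fun L _ => flipF S c L)
          · intro L hL; decide
          · intro L hL _
            have hLD := Finset.mem_filter.mp hL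
            have hfac := (mem_facetFS.mp (hmemD hLD.1).1).2
            exact (flipF_ne hc L hfac).mp hLD.2
          · intro L hL
            obtain ⟨hLD, hseen⟩ := Finset.mem_filter.mp hL
            obtain ⟨hLF, hdoor⟩ := hmemD hLD
            obtain ⟨hlen, hfac⟩ := mem_facetFS.mp hLF
            have hmemF : flipF S c L ∈ FacetFS S m :=
              mem_facetFS.mpr ⟨by rw [flipF_length]; exact hlen, flipF_fac hc L hfac⟩
            have hlabeq : ∀ b ∈ S.erase c, lab b (flipF S c L) = lab b L := by
              intro b hb
              obtain ⟨hbc, hbS⟩ := Finset.mem_erase.mp hb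
              exact (hcong b hbS L (flipF S c L) hLF hmemF
                (flipF_eqv hc L hfac b hbS hbc)).symm
            refine Finset.mem_filter.mpr ⟨Finset.mem_filter.mpr ⟨hmemF, ?_⟩, ?_⟩
            · rw [Finset.image_congr (fun b hb => hlabeq b (Finset.mem_coe.mp hb))]
              exact hdoor
            · rw [flipF_ne hc (flipF S c L) (flipF_fac hc L hfac),
                flipF_flipF hc L hfac]
              exact fun h => ((flipF_ne hc L hfac).mp hseen) h.symm
          · intro L hL
            obtain ⟨hLD, hseen⟩ := Finset.mem_filter.mp hL
            exact flipF_flipF hc L (mem_facetFS.mp (hmemD hLD).1).2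
        rw [hint, zero_add]
        by_cases hca : c = a₀
        · subst hca
          rw [if_pos rfl]
          set lab' : α → List (α → Finset α) → α :=
            fun b L' => lab b (extM S c L') with hlab'
          have hcong' : ∀ a ∈ S.erase c, ∀ L L', L ∈ FacetFS (S.erase c) m →
              L' ∈ FacetFS (S.erase c) m → Eqv L L' a → lab' a L = lab' a L' := by
            intro a ha L M hL hM heqv
            obtain ⟨hlenL, hfL⟩ := mem_facetFS.mp hL
            obtain ⟨hlenM, hfM⟩ := mem_facetFS.mp hM
            exact hcong a (Finset.mem_of_mem_erase ha) _ _
              (mem_facetFS.mpr ⟨by rw [extM_length]; exact hlenL, extM_fac hc L hfL⟩)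
              (mem_facetFS.mpr ⟨by rw [extM_length]; exact hlenM, extM_fac hc M hfM⟩)
              (eqv_extM L M hfL a ha heqv)
          have hsp' : ∀ L' ∈ FacetFS (S.erase c) m, ∀ a ∈ S.erase c,
              lab' a L' ∈ CarrL L' a := by
            intro L' hL' a ha
            obtain ⟨hlenL, hfL⟩ := mem_facetFS.mp hL'
            rw [← carr_extM L' hfL a ha]
            exact hsp (extM S c L')
              (mem_facetFS.mpr ⟨by rw [extM_length]; exact hlenL, extM_fac hc L' hfL⟩)
              a (Finset.mem_of_mem_erase ha)
          have hIH : (∑ L' ∈ FacetFS (S.erase c) m,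
                if (S.erase c).image (fun a => lab' a L') = S.erase c
                then (1 : ZMod 2) else 0) = 1 :=
            ih (S.erase c) (Finset.erase_ssubset hc) m lab' hcong' hsp'
          have hcard : (D.filter (fun L => ¬ Seen S c L)).card =
              ((FacetFS (S.erase c) m).filter
                (fun L' => (S.erase c).image (fun a => lab' a L') = S.erase c)).card := by
            apply Finset.card_bij (fun L _ => resM c L)
            · intro L hL
              obtain ⟨hLD, hns⟩ := Finset.mem_filter.mp hL
              obtain ⟨hLF, hdoor⟩ := hmemD hLD
              obtain ⟨hlen, hfac⟩ := mem_facetFS.mp hLF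
              refine Finset.mem_filter.mpr
                ⟨mem_facetFS.mpr ⟨by rw [resM_length]; exact hlen, resM_fac L hfac hns⟩, ?_⟩
              show (S.erase c).image (fun a => lab a (extM S c (resM c L))) = S.erase c
              rw [extM_resM hc L hfac hns]
              exact hdoor
            · intro L₁ hL₁ L₂ hL₂ heq
              obtain ⟨hLD₁, hns₁⟩ := Finset.mem_filter.mp hL₁
              obtain ⟨hLD₂, hns₂⟩ := Finset.mem_filter.mp hL₂
              have hf₁ := (mem_facetFS.mp (hmemD hLD₁).1).2
              have hf₂ := (mem_facetFS.mp (hmemD hLD₂).1).2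
              rw [← extM_resM hc L₁ hf₁ hns₁, ← extM_resM hc L₂ hf₂ hns₂, heq]
            · intro L' hL'
              obtain ⟨hL'F, hcond⟩ := Finset.mem_filter.mp hL'
              obtain ⟨hlen', hfac'⟩ := mem_facetFS.mp hL'F
              refine ⟨extM S c L', ?_, resM_extM L' hfac'⟩
              refine Finset.mem_filter.mpr ⟨Finset.mem_filter.mpr ⟨?_, ?_⟩, ?_⟩
              · exact mem_facetFS.mpr
                  ⟨by rw [extM_length]; exact hlen', extM_fac hc L' hfac'⟩
              · exact hcond
              · exact extM_not_seen L' hfac'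
          rw [hconst, hcard, ← hconst, Finset.sum_filter]
          exact hIH
        · rw [if_neg hca]
          have hempty : D.filter (fun L => ¬ Seen S c L) = ∅ := by
            rw [Finset.filter_eq_empty_iff]
            intro L hLD hns
            obtain ⟨hLF, hdoor⟩ := hmemD hLD
            obtain ⟨hlen, hfac⟩ := mem_facetFS.mp hLF
            have hcmem : c ∈ (S.erase c).image (fun a => lab a L) := by
              rw [hdoor]
              exact Finset.mem_erase.mpr ⟨hca, hc⟩
            obtain ⟨b, hb, hlb⟩ := Finset.mem_image.mp hcmem
            have hmem : lab b L ∈ CarrL L b := hsp L hLF b (Finset.mem_of_mem_erase hb)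
            rw [hlb] at hmem
            exact not_seen_carr L hfac hns b hb hmem
          rw [hempty, Finset.sum_empty]
      calc ∑ c ∈ S, (∑ L ∈ FacetFS S m,
            if (S.erase c).image (fun a => lab a L) = S.erase a₀ then (1 : ZMod 2) else 0)
          = ∑ c ∈ S, (if c = a₀ then (1 : ZMod 2) else 0) := Finset.sum_congr rfl ev2
        _ = 1 := by rw [Finset.sum_ite_eq' S a₀ (fun _ => (1 : ZMod 2)), if_pos ha₀]

end KSU

/-! ### Bridge from the abstract theory to `OSP`/`iisView` -/
namespace KSU
open scoped Classical

variable {n : ℕ}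

/-- Successive differences along a chain of finsets. -/
def diffsL : Finset (Fin (n + 1)) → List (Finset (Fin (n + 1))) → List (Finset (Fin (n + 1)))
  | _, [] => []
  | prev, u :: t => (u \ prev) :: diffsL u t

lemma fold_diffs (a : Fin (n + 1)) : ∀ (vs : List (Finset (Fin (n + 1))))
    (prev : Finset (Fin (n + 1))), List.Pairwise (· ⊂ ·) (prev :: vs) → a ∉ prev →
    ∀ u ∈ vs, a ∈ u → (∀ u' ∈ vs, a ∈ u' → u ⊆ u') →
    ((diffsL prev vs).take ((diffsL prev vs).findIdx (fun A => decide (a ∈ A)) + 1)).foldr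
      (· ∪ ·) ∅ = u \ prev := by
  intro vs
  induction vs with
  | nil => intro prev _ _ u hu; exact absurd hu (by simp)
  | cons u₁ t ih =>
    intro prev hpw ha u hu hau hmin
    have hpw1 : List.Pairwise (· ⊂ ·) (u₁ :: t) := (List.pairwise_cons.mp hpw).2
    by_cases hau₁ : a ∈ u₁
    · have huu : u = u₁ := by
        rcases List.mem_cons.mp hu with h | h
        · exact h
        · exfalso
          have h1 : u₁ ⊂ u := (List.pairwise_cons.mp hpw1).1 u h
          have h2 : u ⊆ u₁ := hmin u₁ (by simp) hau₁
          exact absurd (lt_of_lt_of_le h1 (Finset.le_iff_subset.mpr h2)) (lt_irrefl _)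
      rw [huu]
      have hmem : a ∈ u₁ \ prev := Finset.mem_sdiff.mpr ⟨hau₁, ha⟩
      simp only [diffsL, List.findIdx_cons, hmem, decide_true, cond_true]
      simp
    · have hne : u ≠ u₁ := fun h => hau₁ (h ▸ hau)
      have hut : u ∈ t := by
        rcases List.mem_cons.mp hu with h | h
        · exact absurd h hne
        · exact h
      have hmin' : ∀ u' ∈ t, a ∈ u' → u ⊆ u' := fun u' hu' => hmin u' (by simp [hu'])
      have hres := ih u₁ hpw1 hau₁ u hut hau hmin'
      have hnm : a ∉ u₁ \ prev := fun h => hau₁ (Finset.mem_sdiff.mp h).1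
      simp only [diffsL, List.findIdx_cons, hnm, decide_false, cond_false]
      rw [List.take_succ_cons, List.foldr_cons, hres]
      have hpu : prev ⊆ u₁ := ((List.pairwise_cons.mp hpw).1 u₁ (by simp)).subset
      have hu1u : u₁ ⊆ u := ((List.pairwise_cons.mp hpw1).1 u hut).subset
      ext x
      simp only [Finset.mem_union, Finset.mem_sdiff]
      constructor
      · rintro (⟨h1, h2⟩ | ⟨h1, h2⟩)
        · exact ⟨hu1u h1, h2⟩
        · exact ⟨h1, fun hx => h2 (hpu hx)⟩
      · rintro ⟨h1, h2⟩
        by_cases hx : x ∈ u₁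
        · exact Or.inl ⟨hx, h2⟩
        · exact Or.inr ⟨h1, hx⟩

lemma diffs_nonempty : ∀ (vs : List (Finset (Fin (n + 1)))) (prev : Finset (Fin (n + 1))),
    List.Pairwise (· ⊂ ·) (prev :: vs) → ∀ A ∈ diffsL prev vs, A.Nonempty := by
  intro vs
  induction vs with
  | nil => intro prev _ A hA; exact absurd hA (by simp [diffsL])
  | cons u t ih =>
    intro prev hpw A hA
    rcases List.mem_cons.mp hA with h | h
    · rw [h]
      rw [Finset.sdiff_nonempty]
      intro hsub
      exact ((List.pairwise_cons.mp hpw).1 u (by simp)).not_subset hsub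
    · exact ih u (List.pairwise_cons.mp hpw).2 A h

lemma diffs_disj_prev : ∀ (vs : List (Finset (Fin (n + 1)))) (prev : Finset (Fin (n + 1))),
    List.Pairwise (· ⊂ ·) (prev :: vs) → ∀ A ∈ diffsL prev vs, Disjoint prev A := by
  intro vs
  induction vs with
  | nil => intro prev _ A hA; exact absurd hA (by simp [diffsL])
  | cons u t ih =>
    intro prev hpw A hA
    rcases List.mem_cons.mp hA with h | h
    · rw [h]; exact Finset.disjoint_sdiff
    · have hpu : prev ⊆ u := ((List.pairwise_cons.mp hpw).1 u (by simp)).subset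
      exact ((ih u (List.pairwise_cons.mp hpw).2 A h).mono_left
        (Finset.le_iff_subset.mpr hpu))

lemma diffs_pairwise : ∀ (vs : List (Finset (Fin (n + 1)))) (prev : Finset (Fin (n + 1))),
    List.Pairwise (· ⊂ ·) (prev :: vs) → List.Pairwise Disjoint (diffsL prev vs) := by
  intro vs
  induction vs with
  | nil => intro prev _; exact List.Pairwise.nil
  | cons u t ih =>
    intro prev hpw
    have hpw1 := (List.pairwise_cons.mp hpw).2
    refine List.pairwise_cons.mpr ⟨?_, ih u hpw1⟩
    intro A hA
    exact ((diffs_disj_prev t u hpw1 A hA).mono_left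
      (Finset.le_iff_subset.mpr (Finset.sdiff_subset)))

lemma diffs_cover (a : Fin (n + 1)) : ∀ (vs : List (Finset (Fin (n + 1))))
    (prev : Finset (Fin (n + 1))), List.Pairwise (· ⊂ ·) (prev :: vs) → a ∉ prev →
    ∀ u ∈ vs, a ∈ u → ∃ A ∈ diffsL prev vs, a ∈ A := by
  intro vs
  induction vs with
  | nil => intro prev _ _ u hu; exact absurd hu (by simp)
  | cons u₁ t ih =>
    intro prev hpw ha u hu hau
    by_cases hau₁ : a ∈ u₁
    · exact ⟨u₁ \ prev, by simp [diffsL], Finset.mem_sdiff.mpr ⟨hau₁, ha⟩⟩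
    · have hut : u ∈ t := by
        rcases List.mem_cons.mp hu with h | h
        · exact absurd (h ▸ hau) hau₁
        · exact h
      obtain ⟨A, hA, haA⟩ := ih u₁ (List.pairwise_cons.mp hpw).2 hau₁ u hut hau
      exact ⟨A, by simp [diffsL, hA], haA⟩

/-- The sorted chain of distinct view values of `W`. -/
noncomputable def chainOf (W : Fin (n + 1) → Finset (Fin (n + 1))) :
    List (Finset (Fin (n + 1))) :=
  List.insertionSort (fun U V => U.card ≤ V.card)
    ((Finset.univ.image W)).toList

lemma mem_chainOf {W : Fin (n + 1) → Finset (Fin (n + 1))} {U : Finset (Fin (n + 1))} :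
    U ∈ chainOf W ↔ ∃ b, W b = U := by
  rw [chainOf]
  rw [(List.perm_insertionSort _ _).mem_iff]
  simp [Finset.mem_toList]

lemma chain_pairwise {W : Fin (n + 1) → Finset (Fin (n + 1))}
    (hW : ISR Finset.univ W) :
    List.Pairwise (· ⊂ ·) ((∅ : Finset (Fin (n + 1))) :: chainOf W) := by
  letI : IsTotal (Finset (Fin (n + 1))) (fun U V => U.card ≤ V.card) :=
    ⟨fun U V => Nat.le_total _ _⟩
  letI : IsTrans (Finset (Fin (n + 1))) (fun U V => U.card ≤ V.card) :=
    ⟨fun U V X => Nat.le_trans⟩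
  have hsorted : List.Pairwise (fun U V => U.card ≤ V.card) (chainOf W) :=
    List.pairwise_insertionSort _ _
  have hnodup : (chainOf W).Nodup :=
    (List.perm_insertionSort _ _).nodup_iff.mpr (Finset.nodup_toList _)
  refine List.pairwise_cons.mpr ⟨?_, ?_⟩
  · intro U hU
    obtain ⟨b, rfl⟩ := mem_chainOf.mp hU
    rw [Finset.ssubset_iff_of_subset (Finset.empty_subset _)]
    exact ⟨b, hW.2.1 b (Finset.mem_univ b), Finset.notMem_empty b⟩
  · have hcomb := hsorted.and hnodup
    apply hcomb.imp_of_mem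
    intro U V hUm hVm h
    obtain ⟨b, rfl⟩ := mem_chainOf.mp hUm
    obtain ⟨e, rfl⟩ := mem_chainOf.mp hVm
    rcases hW.2.2.2.2 b (Finset.mem_univ b) e (Finset.mem_univ e) with hs | hs
    · exact Finset.ssubset_iff_subset_ne.mpr ⟨hs, h.2⟩
    · exact absurd (Finset.eq_of_subset_of_card_le hs h.1).symm h.2

/-- Reconstruct an `OSP` from an immediate-snapshot view function. -/
noncomputable def ospOf (W : Fin (n + 1) → Finset (Fin (n + 1)))
    (hW : ISR Finset.univ W) : OSP n where
  parts := diffsL ∅ (chainOf W)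
  nonempty := diffs_nonempty (chainOf W) ∅ (chain_pairwise hW)
  pairwise_disjoint := diffs_pairwise (chainOf W) ∅ (chain_pairwise hW)
  cover := by
    intro a
    exact diffs_cover a (chainOf W) ∅ (chain_pairwise hW) (Finset.notMem_empty a)
      (W a) (mem_chainOf.mpr ⟨a, rfl⟩) (hW.2.1 a (Finset.mem_univ a))

lemma viewSet_ospOf (W : Fin (n + 1) → Finset (Fin (n + 1)))
    (hW : ISR Finset.univ W) (a : Fin (n + 1)) :
    (ospOf W hW).viewSet a = W a := by
  show ((diffsL ∅ (chainOf W)).take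
      ((diffsL ∅ (chainOf W)).findIdx (fun A => decide (a ∈ A)) + 1)).foldr (· ∪ ·) ∅ = W a
  rw [fold_diffs a (chainOf W) ∅ (chain_pairwise hW) (Finset.notMem_empty a)
    (W a) (mem_chainOf.mpr ⟨a, rfl⟩) (hW.2.1 a (Finset.mem_univ a)) ?_, Finset.sdiff_empty]
  intro u' hu' hau'
  obtain ⟨b, rfl⟩ := mem_chainOf.mp hu'
  exact hW.2.2.2.1 b (Finset.mem_univ b) a hau'

/-- Turn a tuple of round partitions into an abstract facet (head = last round). -/
def toMat : (m : ℕ) → (Fin m → OSP n) → List (Fin (n + 1) → Finset (Fin (n + 1)))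
  | 0, _ => []
  | m + 1, γ => (fun a => (γ (Fin.last m)).viewSet a) :: toMat m (fun i => γ i.castSucc)

lemma toMat_length : ∀ (m : ℕ) (γ : Fin m → OSP n), (toMat m γ).length = m := by
  intro m
  induction m with
  | zero => intro γ; rfl
  | succ m ih => intro γ; show _ + 1 = _ + 1; rw [ih]

/-- The key congruence: the Lean view tree is determined by the `Eqv`-class and
the input values on the carrier. -/
lemma iisView_congr : ∀ (m : ℕ) (γ γ' : Fin m → OSP n)
    (X X' : Fin (n + 1) → Fin (n + 1)) (a : Fin (n + 1)),
    Eqv (toMat m γ) (toMat m γ') a → (∀ b ∈ CarrL (toMat m γ) a, X b = X' b) →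
    iisView X m γ a = iisView X' m γ' a := by
  intro m
  induction m with
  | zero =>
    intro γ γ' X X' a _ hX
    show View.base (X a) = View.base (X' a)
    rw [hX a (by show a ∈ ({a} : Finset _); simp)]
  | succ m ih =>
    intro γ γ' X X' a heqv hX
    obtain ⟨h1, h2⟩ := heqv
    show View.snap _ = View.snap _
    congr 1
    funext b
    have hset : (γ (Fin.last m)).viewSet a = (γ' (Fin.last m)).viewSet a := h1
    rw [← hset]
    by_cases hb : b ∈ (γ (Fin.last m)).viewSet a
    · rw [if_pos hb, if_pos hb]
      congr 1
      apply ih _ _ X X' b (h2 b hb)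
      intro e he
      apply hX
      show e ∈ Finset.biUnion _ _
      exact Finset.mem_biUnion.mpr ⟨b, hb, he⟩
    · rw [if_neg hb, if_neg hb]

lemma exists_toMat : ∀ (m : ℕ) (L : List (Fin (n + 1) → Finset (Fin (n + 1)))),
    L.length = m → Fac Finset.univ L → ∃ γ : Fin m → OSP n, toMat m γ = L := by
  intro m
  induction m with
  | zero =>
    intro L hlen _
    exact ⟨Fin.elim0, by rw [List.length_eq_zero_iff.mp hlen]; rfl⟩
  | succ m ih =>
    intro L hlen hfac
    cases L with
    | nil => simp at hlen
    | cons W t =>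
      obtain ⟨γt, hγt⟩ := ih t (by simpa using hlen) (fun Y hY => hfac Y (by simp [hY]))
      have hW : ISR Finset.univ W := hfac W (by simp)
      refine ⟨Fin.snoc γt (ospOf W hW), ?_⟩
      simp only [toMat, Fin.snoc_last, Fin.snoc_castSucc]
      rw [List.cons.injEq]
      constructor
      · funext a
        exact viewSet_ospOf W hW a
      · rw [← hγt]

end KSU
/-- **Theorem 3: unsolvability of k-set agreement by multi-round
protocols.** For `n ≥ 1`, `1 ≤ k ≤ n`, and `m ≥ 1`, there is no morphism from
`I[IS^m]` to `I[SA_k]`: the `k`-set agreement task among `n+1` processes is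
not solvable by the `m`-round iterated immediate snapshot protocol. -/
theorem kset_unsolvable (n k m : ℕ) (hn : 1 ≤ n) (hk1 : 1 ≤ k) (hkn : k ≤ n)
    (hm : 1 ≤ m) :
    IsEmpty (SMorphism (IISmodel n m) (SAmodel n k)) := by
  classical
  refine ⟨fun δ => ?_⟩
  -- the decision function: output of an agent depends only on its view
  set dec : Fin (n + 1) → View n → Fin (n + 1) := fun a v => (δ.vmap (a, v)).2.2 with hdecdef
  have hdec : ∀ (σ : IISState n m) (a : Fin (n + 1)),
      (δ.smap σ).val.2 a = dec a (iisView σ.1 m σ.2 a) := by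
    intro σ a
    have h := δ.vert_comm σ a
    have h2 := congrArg (fun p => p.2.2) h
    exact h2.symm
  -- inputs are preserved by the morphism
  have hinput : ∀ σ : IISState n m, (δ.smap σ).val.1 = σ.1 := by
    intro σ
    funext a
    have h := δ.label_eq σ
    have hmem : (Sum.inl (a, σ.1 a) : APfc n) ∈ (SAmodel n k).label (δ.smap σ) := by
      rw [← h]
      exact ⟨a, rfl⟩
    obtain ⟨b, hb⟩ := hmem
    injection hb with hb'
    injection hb' with hba hv
    rw [← hba] at hv
    exact hv.symm
  -- the Sperner labelling
  set lab : Fin (n + 1) → List (Fin (n + 1) → Finset (Fin (n + 1))) → Fin (n + 1) :=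
    fun a L => if h : ∃ γ : Fin m → OSP n, KSU.toMat m γ = L then
      dec a (iisView (fun x => x) m h.choose a) else a with hlabdef
  have hlabeq : ∀ (a : Fin (n + 1)) (L) (h : ∃ γ : Fin m → OSP n, KSU.toMat m γ = L),
      lab a L = dec a (iisView (fun x => x) m h.choose a) := by
    intro a L h
    rw [hlabdef]
    exact dif_pos h
  -- congruence of the labelling
  have hcong : ∀ a ∈ (Finset.univ : Finset (Fin (n + 1))), ∀ L L',
      L ∈ KSU.FacetFS Finset.univ m → L' ∈ KSU.FacetFS Finset.univ m →
      KSU.Eqv L L' a → lab a L = lab a L' := by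
    intro a _ L L' hL hL' heqv
    obtain ⟨hlen, hfac⟩ := KSU.mem_facetFS.mp hL
    obtain ⟨hlen', hfac'⟩ := KSU.mem_facetFS.mp hL'
    have h : ∃ γ : Fin m → OSP n, KSU.toMat m γ = L := KSU.exists_toMat m L hlen hfac
    have h' : ∃ γ : Fin m → OSP n, KSU.toMat m γ = L' := KSU.exists_toMat m L' hlen' hfac'
    rw [hlabeq a L h, hlabeq a L' h']
    congr 1
    apply KSU.iisView_congr m h.choose h'.choose _ _ a
    · rw [h.choose_spec, h'.choose_spec]
      exact heqv
    · intro b _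
      rfl
  -- the Sperner condition: decisions lie in the carrier
  have hsp : ∀ L ∈ KSU.FacetFS (Finset.univ : Finset (Fin (n + 1))) m,
      ∀ a ∈ (Finset.univ : Finset (Fin (n + 1))), lab a L ∈ KSU.CarrL L a := by
    intro L hL a _
    obtain ⟨hlen, hfac⟩ := KSU.mem_facetFS.mp hL
    have h : ∃ γ : Fin m → OSP n, KSU.toMat m γ = L := KSU.exists_toMat m L hlen hfac
    rw [hlabeq a L h]
    set γ := h.choose with hγdef
    have hγ : KSU.toMat m γ = L := h.choose_spec
    have key : ∀ w : Fin (n + 1),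
        dec a (iisView (fun x => x) m γ a) ∈ KSU.CarrL L a ∪ {w} := by
      intro w
      set X' : Fin (n + 1) → Fin (n + 1) :=
        fun b => if b ∈ KSU.CarrL L a then b else w with hX'def
      have hview : iisView X' m γ a = iisView (fun x => x) m γ a := by
        apply KSU.iisView_congr m γ γ X' (fun x => x) a (KSU.eqv_refl _ a)
        intro b hb
        rw [hγ] at hb
        rw [hX'def]
        simp only [if_pos hb]
      set σ' : IISState n m := (X', γ) with hσ'def
      have hd : (δ.smap σ').val.2 a = dec a (iisView (fun x => x) m γ a) := by
        rw [hdec σ' a]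
        show dec a (iisView X' m γ a) = _
        rw [hview]
      have hval : (δ.smap σ').val.2 a ∈ Finset.univ.image (δ.smap σ').val.2 :=
        Finset.mem_image_of_mem _ (Finset.mem_univ a)
      have hval2 := (δ.smap σ').property.2 hval
      rw [hinput σ'] at hval2
      obtain ⟨b, _, hb⟩ := Finset.mem_image.mp hval2
      rw [← hd]
      show (δ.smap σ').val.2 a ∈ _
      rw [← hb]
      show X' b ∈ _
      rw [hX'def]
      by_cases hbc : b ∈ KSU.CarrL L a
      · simp only [if_pos hbc]
        exact Finset.mem_union_left _ hbc
      · simp only [if_neg hbc]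
        exact Finset.mem_union_right _ (Finset.mem_singleton_self w)
    have h0 := key ⟨0, by omega⟩
    have h1 := key ⟨1, by omega⟩
    rcases Finset.mem_union.mp h0 with hin | hw0
    · exact hin
    rcases Finset.mem_union.mp h1 with hin | hw1
    · exact hin
    exfalso
    rw [Finset.mem_singleton] at hw0 hw1
    rw [hw1] at hw0
    exact absurd (congrArg Fin.val hw0) (by simp)
  -- apply Sperner's lemma
  have hsum := KSU.sperner (Finset.univ : Finset (Fin (n + 1))) m lab hcong hsp
  have hex : ∃ L ∈ KSU.FacetFS (Finset.univ : Finset (Fin (n + 1))) m,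
      Finset.univ.image (fun a => lab a L) = Finset.univ := by
    by_contra hcon
    push_neg at hcon
    rw [Finset.sum_congr rfl (fun L hL => if_neg (hcon L hL))] at hsum
    rw [Finset.sum_const_zero] at hsum
    exact absurd hsum (by decide)
  obtain ⟨L, hLF, himg⟩ := hex
  obtain ⟨hlen, hfac⟩ := KSU.mem_facetFS.mp hLF
  have h : ∃ γ : Fin m → OSP n, KSU.toMat m γ = L := KSU.exists_toMat m L hlen hfac
  set σ : IISState n m := ((fun x => x), h.choose) with hσdef
  have hdecs : (δ.smap σ).val.2 = fun a => lab a L := by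
    funext a
    rw [hdec σ a, hlabeq a L h]
  have hcard := (δ.smap σ).property.1
  rw [hdecs, himg] at hcard
  rw [Finset.card_univ, Fintype.card_fin] at hcard
  omega
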